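/- arXiv:2602.16605 — 4 statements merged into one kernel-verified Lean document; each statement's English description precedes it below -/
import Mathlib

section
/- Let T be a rooted tree, and let u₁v₁ and u₂v₂ be two transversal pairs of T (i.e., in each pair neither element is an ancestor of the other) that do not cross. Then the rectangles R₁ = L(u₁) × L(v₁) and R₂ = L(u₂) × L(v₂) are either disjoint, or one is contained in the other (i.e., the family of such rectangles is laminar), provided for each i the intervals L(uᵢ), L(vᵢ) are disjoint. -/
/-!
Two rectangles that share a point `(a, b)` have comparable first sides (`u₁` and `u₂` are both
ancestors of the leaf `a`, and ancestors of a node form a chain) and likewise comparable second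
sides. If both comparisons go the same way the rectangles are nested. If they go opposite ways,
say `u₁` is an ancestor of `u₂` and `v₂` of `v₁`, then non-crossing forces one of these to be an
equality, and again the rectangles are nested.
-/

section LeafRectangles

variable {V : Type*} {anc : V → V → Prop} {IsLeaf : V → Prop} {L : V → Set V}

theorem leafSet_subset_of_anc (htrans : ∀ u v w, anc u v → anc v w → anc u w)
    (hL : ∀ t, L t = {l | IsLeaf l ∧ anc t l}) {s t : V} (h : anc s t) : L t ⊆ L s := by
  intro l hl
  rw [hL] at hl ⊢
  exact ⟨hl.1, htrans s t l h hl.2⟩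

theorem leafRect_subset_of_anc (htrans : ∀ u v w, anc u v → anc v w → anc u w)
    (hL : ∀ t, L t = {l | IsLeaf l ∧ anc t l}) {u₁ v₁ u₂ v₂ : V}
    (hu : anc u₁ u₂) (hv : anc v₁ v₂) : L u₂ ×ˢ L v₂ ⊆ L u₁ ×ˢ L v₁ :=
  Set.prod_mono (leafSet_subset_of_anc htrans hL hu) (leafSet_subset_of_anc htrans hL hv)

theorem anc_or_anc_of_leafSet_inter (htree : ∀ u v w, anc u w → anc v w → anc u v ∨ anc v u)
    (hL : ∀ t, L t = {l | IsLeaf l ∧ anc t l}) {u v l : V} (hu : l ∈ L u) (hv : l ∈ L v) :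
    anc u v ∨ anc v u := by
  rw [hL] at hu hv
  exact htree u v l hu.2 hv.2

theorem leafRect_nested_of_anc_of_anc (htrans : ∀ u v w, anc u v → anc v w → anc u w)
    (hL : ∀ t, L t = {l | IsLeaf l ∧ anc t l}) {u₁ v₁ u₂ v₂ : V}
    (hu : anc u₁ u₂) (hv : anc v₂ v₁) (heq : u₁ = u₂ ∨ v₂ = v₁) :
    L u₁ ×ˢ L v₁ ⊆ L u₂ ×ˢ L v₂ ∨ L u₂ ×ˢ L v₂ ⊆ L u₁ ×ˢ L v₁ := by
  rcases heq with rfl | rfl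
  · exact Or.inl (Set.prod_mono subset_rfl (leafSet_subset_of_anc htrans hL hv))
  · exact Or.inr (Set.prod_mono (leafSet_subset_of_anc htrans hL hu) subset_rfl)

end LeafRectangles

theorem stmt1_general {V : Type*} (anc : V → V → Prop)
    (htrans : ∀ u v w, anc u v → anc v w → anc u w)
    (htree : ∀ u v w, anc u w → anc v w → anc u v ∨ anc v u)
    (IsLeaf : V → Prop)
    (L : V → Set V) (hL : ∀ t, L t = {l | IsLeaf l ∧ anc t l})
    (u₁ v₁ u₂ v₂ : V)
    -- the two pairs do not cross
    (hnocross : ¬ ((((anc u₁ u₂ ∧ u₁ ≠ u₂) ∨ (anc u₁ v₂ ∧ u₁ ≠ v₂)) ∨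
                    ((anc v₁ u₂ ∧ v₁ ≠ u₂) ∨ (anc v₁ v₂ ∧ v₁ ≠ v₂))) ∧
                   (((anc u₂ u₁ ∧ u₂ ≠ u₁) ∨ (anc u₂ v₁ ∧ u₂ ≠ v₁)) ∨
                    ((anc v₂ u₁ ∧ v₂ ≠ u₁) ∨ (anc v₂ v₁ ∧ v₂ ≠ v₁))))) :
    Disjoint (L u₁ ×ˢ L v₁) (L u₂ ×ˢ L v₂) ∨
      L u₁ ×ˢ L v₁ ⊆ L u₂ ×ˢ L v₂ ∨ L u₂ ×ˢ L v₂ ⊆ L u₁ ×ˢ L v₁ := by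
  rw [or_iff_not_imp_left, Set.not_disjoint_iff]
  rintro ⟨⟨a, b⟩, ⟨ha₁, hb₁⟩, ⟨ha₂, hb₂⟩⟩
  rcases anc_or_anc_of_leafSet_inter htree hL ha₁ ha₂ with hu | hu <;>
    rcases anc_or_anc_of_leafSet_inter htree hL hb₁ hb₂ with hv | hv
  · exact Or.inr (leafRect_subset_of_anc htrans hL hu hv)
  · refine leafRect_nested_of_anc_of_anc htrans hL hu hv ?_
    by_contra! hne
    exact hnocross ⟨Or.inl (Or.inl ⟨hu, hne.1⟩), Or.inr (Or.inr ⟨hv, hne.2⟩)⟩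
  · refine (leafRect_nested_of_anc_of_anc htrans hL hu hv ?_).symm
    by_contra! hne
    exact hnocross ⟨Or.inr (Or.inr ⟨hv, hne.2⟩), Or.inl (Or.inl ⟨hu, hne.1⟩)⟩
  · exact Or.inl (leafRect_subset_of_anc htrans hL hu hv)

/-- In a rooted tree, if `u₁v₁` and `u₂v₂` are non-crossing transversal pairs
(in each pair neither node is an ancestor of the other), and for each `i` the leaf
sets `L uᵢ`, `L vᵢ` are disjoint, then the rectangles `L u₁ ×ˢ L v₁` and
`L u₂ ×ˢ L v₂` are disjoint or one contains the other. -/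
theorem stmt1 {V : Type*} (anc : V → V → Prop)
    (hrefl : ∀ v, anc v v)
    (htrans : ∀ u v w, anc u v → anc v w → anc u w)
    (hantisymm : ∀ u v, anc u v → anc v u → u = v)
    (htree : ∀ u v w, anc u w → anc v w → anc u v ∨ anc v u)
    (IsLeaf : V → Prop)
    (hleaf : ∀ v, ∃ l, IsLeaf l ∧ anc v l)
    (hbranch : ∀ u v, anc u v → u ≠ v → ∃ l, IsLeaf l ∧ anc u l ∧ ¬ anc v l)
    (L : V → Set V) (hL : ∀ t, L t = {l | IsLeaf l ∧ anc t l})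
    (u₁ v₁ u₂ v₂ : V)
    -- transversal pairs
    (htv₁ : ¬ anc u₁ v₁ ∧ ¬ anc v₁ u₁)
    (htv₂ : ¬ anc u₂ v₂ ∧ ¬ anc v₂ u₂)
    -- the two pairs do not cross
    (hnocross : ¬ ((((anc u₁ u₂ ∧ u₁ ≠ u₂) ∨ (anc u₁ v₂ ∧ u₁ ≠ v₂)) ∨
                    ((anc v₁ u₂ ∧ v₁ ≠ u₂) ∨ (anc v₁ v₂ ∧ v₁ ≠ v₂))) ∧
                   (((anc u₂ u₁ ∧ u₂ ≠ u₁) ∨ (anc u₂ v₁ ∧ u₂ ≠ v₁)) ∨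
                    ((anc v₂ u₁ ∧ v₂ ≠ u₁) ∨ (anc v₂ v₁ ∧ v₂ ≠ v₁)))))
    (hd₁ : Disjoint (L u₁) (L v₁))
    (hd₂ : Disjoint (L u₂) (L v₂)) :
    Disjoint (L u₁ ×ˢ L v₁) (L u₂ ×ˢ L v₂) ∨
      L u₁ ×ˢ L v₁ ⊆ L u₂ ×ˢ L v₂ ∨ L u₂ ×ˢ L v₂ ⊆ L u₁ ×ˢ L v₁ :=
  stmt1_general anc htrans htree IsLeaf L hL u₁ v₁ u₂ v₂ hnocross
end

section
/- For every integer n ≥ 1, if a family R of n pairwise-disjoint axis-aligned rectangles is contained in a rectangle R₀, then the set difference R₀ minus the union of the rectangles in R can be partitioned into at most O(n) pairwise-disjoint axis-aligned rectangles; concretely, at most 3n+1 rectangles suffice. -/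
/-!
Through every free point take its maximal free vertical segment, and merge horizontally adjacent
columns whose segments are the same interval; the resulting maximal rectangles (cells) partition
the free region `R₀ \ ⋃ Rᵢ`. Every cell has, on its left side `{x} × [ℓ, h]`, one of `3n + 1`
marked points: the bottom-left corner of `R₀` and, for each obstacle, the points just above its
top-left corner, just below its bottom-left corner and just right of its bottom-right corner.
Indeed, unless `(x, ℓ)` itself is marked, look at column `x - 1`: if `(x - 1, ℓ)` is covered, the
covering obstacle would have its bottom-right corner at `(x - 1, ℓ)`, so this case cannot occur;
if it is free, its free segment starts at `ℓ` but must end at a height other than `h` (otherwise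
the cell would extend further left), and the obstacle capping the lower of the two segments
provides the point. Disjoint cells get distinct points.
-/

open Set Function

namespace Int

variable {s : Set ℤ} {x y : ℤ}

theorem succ_mem_ordConnectedComponent (hy : y ∈ ordConnectedComponent s x) (hs : y + 1 ∈ s) :
    y + 1 ∈ ordConnectedComponent s x := by
  refine mem_ordConnectedComponent_trans hy (mem_ordConnectedComponent.2 ?_)
  rw [uIcc_of_le (by omega)]
  intro t ht
  obtain rfl | rfl : t = y ∨ t = y + 1 := by simp only [mem_Icc] at ht; omega
  exacts [ordConnectedComponent_subset hy, hs]

theorem pred_mem_ordConnectedComponent (hy : y ∈ ordConnectedComponent s x) (hs : y - 1 ∈ s) :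
    y - 1 ∈ ordConnectedComponent s x := by
  refine mem_ordConnectedComponent_trans hy (mem_ordConnectedComponent.2 ?_)
  rw [uIcc_of_ge (by omega)]
  intro t ht
  obtain rfl | rfl : t = y - 1 ∨ t = y := by simp only [mem_Icc] at ht; omega
  exacts [hs, ordConnectedComponent_subset hy]

theorem pred_notMem_of_ordConnectedComponent_eq_Icc {a b : ℤ}
    (hc : ordConnectedComponent s x = Icc a b) (hab : a ≤ b) : a - 1 ∉ s := fun h => by
  have := pred_mem_ordConnectedComponent (hc ▸ left_mem_Icc.2 hab) h
  rw [hc] at this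
  exact absurd this.1 (by omega)

theorem succ_notMem_of_ordConnectedComponent_eq_Icc {a b : ℤ}
    (hc : ordConnectedComponent s x = Icc a b) (hab : a ≤ b) : b + 1 ∉ s := fun h => by
  have := succ_mem_ordConnectedComponent (hc ▸ right_mem_Icc.2 hab) h
  rw [hc] at this
  exact absurd this.2 (by omega)

theorem exists_ordConnectedComponent_eq_Icc (hs : s.Finite) (hx : x ∈ s) :
    ∃ a b, ordConnectedComponent s x = Icc a b := by
  set c := ordConnectedComponent s x
  have hne : c.Nonempty := nonempty_ordConnectedComponent.2 hx
  have hfin : c.Finite := hs.subset ordConnectedComponent_subset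
  exact ⟨sInf c, sSup c, Subset.antisymm
    (fun y hy => ⟨csInf_le hfin.bddBelow hy, le_csSup hfin.bddAbove hy⟩)
    (OrdConnected.out inferInstance (Int.csInf_mem hne hfin.bddBelow)
      (Int.csSup_mem hne hfin.bddAbove))⟩

end Int

theorem Set.exists_fin_pairwiseDisjoint_of_forall_mem {α : Type*} {C : Set (Set α)}
    (hC : C.PairwiseDisjoint id) (S : Finset α) (hS : ∀ c ∈ C, ∃ s ∈ S, s ∈ c) :
    ∃ m ≤ S.card, ∃ P : Fin m → Set α,
      (∀ k, P k ∈ C) ∧ Pairwise (Disjoint on P) ∧ ⋃ k, P k = ⋃₀ C := by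
  choose f hfS hfc using hS
  let g : C → S := fun c => ⟨f c c.2, hfS c c.2⟩
  have hg : Injective g := fun c d hcd => by
    by_contra hne
    have hf : f c c.2 = f d d.2 := congrArg Subtype.val hcd
    exact (hC c.2 d.2 (Subtype.coe_ne_coe.2 hne)).ne_of_mem (hfc c c.2) (hf ▸ hfc d d.2) rfl
  have : Finite C := Finite.of_injective g hg
  let e := Finite.equivFin C
  refine ⟨Nat.card C, ?_, fun k => e.symm k, fun k => (e.symm k).2, ?_, ?_⟩
  · simpa using Nat.card_le_card_of_injective g hg
  · intro k l hkl
    exact hC (e.symm k).2 (e.symm l).2 (Subtype.coe_ne_coe.2 (e.symm.injective.ne hkl))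
  · rw [sUnion_eq_iUnion]
    exact e.symm.surjective.iUnion_comp (fun c : C => (c : Set α))

namespace GridRectangles

def verticalRun (F : Set (ℤ × ℤ)) (x y : ℤ) : Set ℤ :=
  ordConnectedComponent {t | (x, t) ∈ F} y

/-- The vertical run through `p`, stretched sideways over the adjacent columns whose run through
row `p.2` is the very same interval. -/
def cell (F : Set (ℤ × ℤ)) (p : ℤ × ℤ) : Set (ℤ × ℤ) :=
  ordConnectedComponent {u | verticalRun F u p.2 = verticalRun F p.1 p.2} p.1 ×ˢ
    verticalRun F p.1 p.2

section Cells

variable {F : Set (ℤ × ℤ)} {p q : ℤ × ℤ} {x y t : ℤ}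

theorem verticalRun_subset : verticalRun F x y ⊆ {t | (x, t) ∈ F} :=
  ordConnectedComponent_subset

theorem verticalRun_eq_of_mem (ht : t ∈ verticalRun F x y) :
    verticalRun F x t = verticalRun F x y :=
  (ordConnectedComponent_eq ht).symm

theorem mem_cell_self (hp : p ∈ F) : p ∈ cell F p :=
  ⟨self_mem_ordConnectedComponent.2 rfl, self_mem_ordConnectedComponent.2 hp⟩

theorem verticalRun_congr_row {u y' : ℤ} (hy : y' ∈ verticalRun F x y)
    (hu : verticalRun F u y = verticalRun F x y) : verticalRun F u y' = verticalRun F x y' := by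
  rw [verticalRun_eq_of_mem (by rwa [hu] : y' ∈ verticalRun F u y), hu, verticalRun_eq_of_mem hy]

theorem verticalRun_col_eq_of_mem_cell (hq : q ∈ cell F p) :
    verticalRun F q.1 p.2 = verticalRun F p.1 p.2 := by
  have := ordConnectedComponent_subset hq.1
  exact this

theorem verticalRun_eq_of_mem_cell (hq : q ∈ cell F p) :
    verticalRun F q.1 q.2 = verticalRun F p.1 p.2 := by
  rw [verticalRun_congr_row hq.2 (verticalRun_col_eq_of_mem_cell hq), verticalRun_eq_of_mem hq.2]

theorem cell_subset : cell F p ⊆ F := fun q hq => by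
  have : q.2 ∈ verticalRun F q.1 p.2 := by rw [verticalRun_col_eq_of_mem_cell hq]; exact hq.2
  exact verticalRun_subset this

theorem cell_eq_of_mem (hq : q ∈ cell F p) : cell F q = cell F p := by
  have hrun := verticalRun_eq_of_mem_cell hq
  have hp : p.2 ∈ verticalRun F q.1 q.2 := by
    rw [hrun]; exact mem_ordConnectedComponent_trans hq.2 (mem_ordConnectedComponent_comm.1 hq.2)
  have hcols : {u | verticalRun F u q.2 = verticalRun F q.1 q.2} =
      {u | verticalRun F u p.2 = verticalRun F p.1 p.2} := by
    ext u
    refine ⟨fun hu => ?_, fun hu => ?_⟩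
    · exact (verticalRun_congr_row hp hu).trans (verticalRun_col_eq_of_mem_cell hq)
    · rw [← verticalRun_col_eq_of_mem_cell hq] at hu
      exact verticalRun_congr_row (by rw [verticalRun_col_eq_of_mem_cell hq]; exact hq.2) hu
  unfold cell
  rw [hcols, hrun, ← ordConnectedComponent_eq hq.1]

theorem pairwiseDisjoint_cell : (cell F '' F).PairwiseDisjoint id := by
  rintro _ ⟨p, -, rfl⟩ _ ⟨q, -, rfl⟩ hne
  refine disjoint_left.2 fun z hzp hzq => hne ?_
  rw [← cell_eq_of_mem hzp, cell_eq_of_mem hzq]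

theorem sUnion_image_cell : ⋃₀ (cell F '' F) = F :=
  (sUnion_subset (by rintro _ ⟨p, -, rfl⟩; exact cell_subset)).antisymm
    fun p hp => mem_sUnion_of_mem (mem_cell_self hp) (mem_image_of_mem _ hp)

end Cells

/-- The shape of the left side `{x} × [ℓ, h]` of a cell: in `left_ne`, a free segment of column
`x - 1` from row `ℓ` to row `h` would have let the cell extend one column further left. -/
structure IsLeftEdge (F : Set (ℤ × ℤ)) (x ℓ h : ℤ) : Prop where
  le : ℓ ≤ h
  mem : ∀ t ∈ Icc ℓ h, (x, t) ∈ F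
  bot_notMem : (x, ℓ - 1) ∉ F
  top_notMem : (x, h + 1) ∉ F
  left_ne : (x - 1, ℓ) ∈ F → (x - 1, ℓ - 1) ∉ F →
    ∃ h', h' ≠ h ∧ ℓ ≤ h' ∧ (∀ t ∈ Icc ℓ h', (x - 1, t) ∈ F) ∧ (x - 1, h' + 1) ∉ F

section FiniteCells

variable {F : Set (ℤ × ℤ)} {p : ℤ × ℤ} {x y ℓ h : ℤ}

theorem exists_verticalRun_eq_Icc (hF : F.Finite) (hp : (x, y) ∈ F) :
    ∃ ℓ h, verticalRun F x y = Icc ℓ h :=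
  Int.exists_ordConnectedComponent_eq_Icc (hF.preimage (Prod.mk_right_injective x).injOn) hp

theorem isLeftEdge_of_verticalRun (hF : F.Finite) (hV : verticalRun F x ℓ = Icc ℓ h)
    (hle : ℓ ≤ h) (hleft : verticalRun F (x - 1) ℓ ≠ Icc ℓ h) : IsLeftEdge F x ℓ h where
  le := hle
  mem t ht := verticalRun_subset (hV ▸ ht)
  bot_notMem := Int.pred_notMem_of_ordConnectedComponent_eq_Icc hV hle
  top_notMem := Int.succ_notMem_of_ordConnectedComponent_eq_Icc hV hle
  left_ne hw hbot := by
    obtain ⟨ℓ', h', hV'⟩ := exists_verticalRun_eq_Icc hF hw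
    have hℓ : ℓ ∈ Icc ℓ' h' := hV' ▸ self_mem_ordConnectedComponent.2 hw
    obtain rfl : ℓ' = ℓ := by
      by_contra hne
      obtain ⟨h₁, h₂⟩ := hℓ
      have : ℓ - 1 ∈ verticalRun F (x - 1) ℓ := by rw [hV']; exact ⟨by omega, by omega⟩
      exact hbot (verticalRun_subset this)
    exact ⟨h', fun heq => hleft (heq ▸ hV'), hℓ.2, fun t ht => verticalRun_subset (hV' ▸ ht),
      Int.succ_notMem_of_ordConnectedComponent_eq_Icc hV' hℓ.2⟩

theorem exists_cell_eq_Icc_prod_Icc_and_isLeftEdge (hF : F.Finite) (hp : p ∈ F) :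
    ∃ x xR ℓ h, x ≤ xR ∧ cell F p = Icc x xR ×ˢ Icc ℓ h ∧ IsLeftEdge F x ℓ h := by
  obtain ⟨ℓ, h, hV⟩ := exists_verticalRun_eq_Icc hF (x := p.1) (y := p.2) hp
  have hpV : p.2 ∈ Icc ℓ h := hV ▸ self_mem_ordConnectedComponent.2 hp
  set P := {u | verticalRun F u p.2 = verticalRun F p.1 p.2}
  have hP : P.Finite := (hF.preimage (Prod.mk_left_injective p.2).injOn).subset fun u hu => by
    have hu : verticalRun F u p.2 = Icc ℓ h := hu.trans hV
    exact verticalRun_subset (hu ▸ hpV : p.2 ∈ verticalRun F u p.2)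
  obtain ⟨x, xR, hH⟩ := Int.exists_ordConnectedComponent_eq_Icc hP (show p.1 ∈ P from rfl)
  have hpH : p.1 ∈ Icc x xR := hH ▸ self_mem_ordConnectedComponent.2 rfl
  have hxP : x ∈ P := ordConnectedComponent_subset (hH ▸ left_mem_Icc.2 (hpH.1.trans hpH.2))
  have hx : verticalRun F x p.2 = Icc ℓ h := hxP.trans hV
  have hle : ℓ ≤ h := hpV.1.trans hpV.2
  refine ⟨x, xR, ℓ, h, hpH.1.trans hpH.2, by rw [cell, hH, hV], isLeftEdge_of_verticalRun hF
    ((verticalRun_eq_of_mem (hx ▸ left_mem_Icc.2 hle)).trans hx) hle fun hleft => ?_⟩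
  have hxP' : x - 1 ∈ P :=
    (verticalRun_eq_of_mem (hleft ▸ hpV)).trans (hleft.trans hV.symm)
  exact Int.pred_notMem_of_ordConnectedComponent_eq_Icc hH (hpH.1.trans hpH.2) hxP'

end FiniteCells

def box (a b c d : ℤ) : Set (ℤ × ℤ) :=
  Icc a b ×ˢ Icc c d

section Obstacles

variable {ι : Type*} {a b c d a' b' c' d' a₀ b₀ c₀ d₀ x y ℓ h : ℤ} {A B C D : ι → ℤ}

@[simp]
theorem mk_mem_box : (x, y) ∈ box a b c d ↔ a ≤ x ∧ x ≤ b ∧ c ≤ y ∧ y ≤ d := by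
  simp only [box, mem_prod, mem_Icc, and_assoc]

theorem le_of_box_subset_box (hs : box a b c d ⊆ box a' b' c' d') (hxy : (x, y) ∈ box a b c d) :
    a' ≤ a ∧ b ≤ b' ∧ c' ≤ c ∧ d ≤ d' := by
  rw [mk_mem_box] at hxy
  have h₁ := hs (mk_mem_box.2 ⟨le_rfl, by omega, le_rfl, by omega⟩ : (a, c) ∈ box a b c d)
  have h₂ := hs (mk_mem_box.2 ⟨by omega, le_rfl, by omega, le_rfl⟩ : (b, d) ∈ box a b c d)
  rw [mk_mem_box] at h₁ h₂
  omega

def freeSet (a₀ b₀ c₀ d₀ : ℤ) (A B C D : ι → ℤ) : Set (ℤ × ℤ) :=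
  box a₀ b₀ c₀ d₀ \ ⋃ i, box (A i) (B i) (C i) (D i)

theorem mk_mem_freeSet : (x, y) ∈ freeSet a₀ b₀ c₀ d₀ A B C D ↔
    (a₀ ≤ x ∧ x ≤ b₀ ∧ c₀ ≤ y ∧ y ≤ d₀) ∧ ∀ i, ¬(A i ≤ x ∧ x ≤ B i ∧ C i ≤ y ∧ y ≤ D i) := by
  simp [freeSet]

theorem exists_mk_mem_box_of_notMem_freeSet (hbox : (x, y) ∈ box a₀ b₀ c₀ d₀)
    (hfree : (x, y) ∉ freeSet a₀ b₀ c₀ d₀ A B C D) : ∃ i, (x, y) ∈ box (A i) (B i) (C i) (D i) := by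
  simpa [freeSet, hbox] using hfree

theorem finite_freeSet : (freeSet a₀ b₀ c₀ d₀ A B C D).Finite :=
  ((finite_Icc a₀ b₀).prod (finite_Icc c₀ d₀)).subset sdiff_subset

def specialPoints [Fintype ι] (a₀ c₀ : ℤ) (A B C D : ι → ℤ) : Finset (ℤ × ℤ) :=
  insert (a₀, c₀) (Finset.univ.image (fun i => (A i, D i + 1)) ∪
    Finset.univ.image (fun i => (A i, C i - 1)) ∪ Finset.univ.image (fun i => (B i + 1, C i)))

theorem mem_specialPoints [Fintype ι] {p : ℤ × ℤ} : p ∈ specialPoints a₀ c₀ A B C D ↔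
    p = (a₀, c₀) ∨ ∃ i, p = (A i, D i + 1) ∨ p = (A i, C i - 1) ∨ p = (B i + 1, C i) := by
  simp only [specialPoints, Finset.mem_insert, Finset.mem_union, Finset.mem_image,
    Finset.mem_univ, true_and, or_assoc, ← exists_or, eq_comm]

theorem card_specialPoints_le [Fintype ι] (a₀ c₀ : ℤ) (A B C D : ι → ℤ) :
    (specialPoints a₀ c₀ A B C D).card ≤ 3 * Fintype.card ι + 1 := by
  have himage (f : ι → ℤ × ℤ) : (Finset.univ.image f).card ≤ Fintype.card ι :=
    Finset.card_image_le.trans_eq Finset.card_univ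
  refine (Finset.card_insert_le _ _).trans (Nat.succ_le_succ ?_)
  refine (Finset.card_union_le _ _).trans ?_
  have := Finset.card_union_le (Finset.univ.image fun i => (A i, D i + 1))
    (Finset.univ.image fun i => (A i, C i - 1))
  have := himage fun i => (A i, D i + 1)
  have := himage fun i => (A i, C i - 1)
  have := himage fun i => (B i + 1, C i)
  omega

theorem exists_specialPoint_of_left_run [Fintype ι]
    (he : IsLeftEdge (freeSet a₀ b₀ c₀ d₀ A B C D) x ℓ h) {h' : ℤ} (hne : h' ≠ h) (hℓ : ℓ ≤ h')
    (hrun : ∀ t ∈ Icc ℓ h', (x - 1, t) ∈ freeSet a₀ b₀ c₀ d₀ A B C D)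
    (htop : (x - 1, h' + 1) ∉ freeSet a₀ b₀ c₀ d₀ A B C D) :
    ∃ t ∈ Icc ℓ h, (x, t) ∈ specialPoints a₀ c₀ A B C D := by
  have hle := he.le
  have hx := (mk_mem_freeSet.1 (he.mem ℓ ⟨le_rfl, he.le⟩)).1
  have hx' := (mk_mem_freeSet.1 (hrun h' ⟨hℓ, le_rfl⟩)).1
  rcases hne.lt_or_gt with hlt | hgt
  · -- the obstacle above column `x - 1` has its bottom-right corner at `(x - 1, h' + 1)`
    have hxh := (mk_mem_freeSet.1 (he.mem h ⟨he.le, le_rfl⟩)).1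
    obtain ⟨k, hk⟩ := exists_mk_mem_box_of_notMem_freeSet
      (mk_mem_box.2 ⟨by omega, by omega, by omega, by omega⟩) htop
    have h₁ := (mk_mem_freeSet.1 (he.mem (h' + 1) ⟨by omega, by omega⟩)).2 k
    have h₂ := (mk_mem_freeSet.1 (hrun h' ⟨hℓ, le_rfl⟩)).2 k
    rw [mk_mem_box] at hk
    exact ⟨h' + 1, ⟨by omega, by omega⟩, mem_specialPoints.2
      (.inr ⟨k, .inr (.inr (Prod.mk_inj.2 ⟨by omega, by omega⟩))⟩)⟩
  · -- the obstacle above column `x` has its bottom-left corner at `(x, h + 1)`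
    obtain ⟨k, hk⟩ := exists_mk_mem_box_of_notMem_freeSet
      (mk_mem_box.2 ⟨by omega, by omega, by omega, by omega⟩) he.top_notMem
    have h₁ := (mk_mem_freeSet.1 (hrun (h + 1) ⟨by omega, by omega⟩)).2 k
    have h₂ := (mk_mem_freeSet.1 (he.mem h ⟨he.le, le_rfl⟩)).2 k
    rw [mk_mem_box] at hk
    exact ⟨h, ⟨he.le, le_rfl⟩, mem_specialPoints.2
      (.inr ⟨k, .inr (.inl (Prod.mk_inj.2 ⟨by omega, by omega⟩))⟩)⟩

theorem eq_or_exists_obstacle_below_of_isLeftEdge [Fintype ι] (he : IsLeftEdge (freeSet a₀ b₀ c₀ d₀ A B C D) x ℓ h)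
    (hs : (x, ℓ) ∉ specialPoints a₀ c₀ A B C D) :
    ℓ = c₀ ∨ ∃ m, A m < x ∧ x ≤ B m ∧ C m ≤ ℓ - 1 ∧ D m = ℓ - 1 := by
  simp only [mem_specialPoints, Prod.mk_inj, not_or, not_exists] at hs
  have hxℓ := mk_mem_freeSet.1 (he.mem ℓ ⟨le_rfl, he.le⟩)
  by_cases hc : ℓ = c₀
  · exact .inl hc
  obtain ⟨m, hm⟩ := exists_mk_mem_box_of_notMem_freeSet
    (mk_mem_box.2 ⟨by omega, by omega, by omega, by omega⟩) he.bot_notMem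
  rw [mk_mem_box] at hm
  have := hxℓ.2 m
  have := hs.2 m
  exact .inr ⟨m, by omega, by omega, by omega, by omega⟩

theorem exists_specialPoint_of_isLeftEdge [Fintype ι]
    (hsub : ∀ i, box (A i) (B i) (C i) (D i) ⊆ box a₀ b₀ c₀ d₀)
    (hdisj : Pairwise (Disjoint on fun i => box (A i) (B i) (C i) (D i)))
    (he : IsLeftEdge (freeSet a₀ b₀ c₀ d₀ A B C D) x ℓ h) :
    ∃ t ∈ Icc ℓ h, (x, t) ∈ specialPoints a₀ c₀ A B C D := by
  by_cases hs : (x, ℓ) ∈ specialPoints a₀ c₀ A B C D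
  · exact ⟨ℓ, ⟨le_rfl, he.le⟩, hs⟩
  have hbelow := eq_or_exists_obstacle_below_of_isLeftEdge he hs
  simp only [mem_specialPoints, Prod.mk_inj, not_or, not_exists] at hs
  have hxℓ := mk_mem_freeSet.1 (he.mem ℓ ⟨le_rfl, he.le⟩)
  by_cases hw : (x - 1, ℓ) ∈ freeSet a₀ b₀ c₀ d₀ A B C D
  · refine (fun ⟨h', hne, hℓ, hrun, htop⟩ => exists_specialPoint_of_left_run he hne hℓ hrun htop)
      (he.left_ne hw ?_)
    rw [mk_mem_freeSet]
    rintro ⟨hbox, hfree⟩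
    rcases hbelow with hc | ⟨m, hm⟩
    · omega
    · exact hfree m ⟨by omega, by omega, by omega, by omega⟩
  exfalso
  have hx : a₀ ≤ x - 1 := by
    rcases hbelow with hc | ⟨m, hm⟩
    · have := hs.1
      omega
    · have := le_of_box_subset_box (hsub m) (x := x - 1) (y := ℓ - 1)
        (mk_mem_box.2 ⟨by omega, by omega, by omega, by omega⟩)
      omega
  obtain ⟨i, hi⟩ := exists_mk_mem_box_of_notMem_freeSet
    (mk_mem_box.2 ⟨hx, by omega, by omega, by omega⟩) hw
  have hCi := (le_of_box_subset_box (hsub i) hi).2.2.1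
  rw [mk_mem_box] at hi
  have := hxℓ.2 i
  have := hs.2 i
  rcases hbelow with hc | ⟨m, hm⟩
  · omega
  -- both obstacles `i` and `m` would contain `(x - 1, ℓ - 1)`
  obtain rfl : i = m := by
    by_contra hne
    exact Disjoint.ne_of_mem (hdisj hne) (a := (x - 1, ℓ - 1))
      (mk_mem_box.2 ⟨by omega, by omega, by omega, by omega⟩)
      (mk_mem_box.2 ⟨by omega, by omega, by omega, by omega⟩) rfl
  omega

end Obstacles

end GridRectangles

open GridRectangles in
theorem stmt3_general (n : ℕ) (R₀ : Set (ℤ × ℤ))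
    (hR₀ : ∃ a b c d : ℤ, R₀ = Set.Icc a b ×ˢ Set.Icc c d)
    (R : Fin n → Set (ℤ × ℤ))
    (hrect : ∀ i, ∃ a b c d : ℤ, R i = Set.Icc a b ×ˢ Set.Icc c d)
    (hsub : ∀ i, R i ⊆ R₀)
    (hdisj : ∀ i j, i ≠ j → Disjoint (R i) (R j)) :
    ∃ (m : ℕ) (P : Fin m → Set (ℤ × ℤ)),
      m ≤ 3 * n + 1 ∧
      (∀ k, ∃ a b c d : ℤ, P k = Set.Icc a b ×ˢ Set.Icc c d) ∧
      (∀ k l, k ≠ l → Disjoint (P k) (P l)) ∧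
      (⋃ k, P k) = R₀ \ ⋃ i, R i := by
  obtain ⟨a₀, b₀, c₀, d₀, rfl⟩ := hR₀
  choose A B C D hR using hrect
  obtain rfl : R = fun i => box (A i) (B i) (C i) (D i) := funext hR
  set F := freeSet a₀ b₀ c₀ d₀ A B C D
  have hcell : ∀ c ∈ cell F '' F, ∃ s ∈ specialPoints a₀ c₀ A B C D, s ∈ c := by
    rintro _ ⟨p, hp, rfl⟩
    obtain ⟨x, xR, ℓ, h, hx, hc, he⟩ :=
      exists_cell_eq_Icc_prod_Icc_and_isLeftEdge finite_freeSet hp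
    obtain ⟨t, ht, hs⟩ := exists_specialPoint_of_isLeftEdge hsub hdisj he
    exact ⟨_, hs, hc ▸ mk_mem_prod (left_mem_Icc.2 hx) ht⟩
  obtain ⟨m, hm, P, hPC, hPdisj, hPU⟩ :=
    exists_fin_pairwiseDisjoint_of_forall_mem pairwiseDisjoint_cell _ hcell
  have hcard := card_specialPoints_le a₀ c₀ A B C D
  rw [Fintype.card_fin] at hcard
  refine ⟨m, P, hm.trans hcard, fun k => ?_, hPdisj, hPU.trans sUnion_image_cell⟩
  obtain ⟨p, hp, hpk⟩ := hPC k
  obtain ⟨x, xR, ℓ, h, -, hc, -⟩ := exists_cell_eq_Icc_prod_Icc_and_isLeftEdge finite_freeSet hp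
  exact ⟨x, xR, ℓ, h, hpk ▸ hc⟩

/-- The complement, inside a rectangle `R₀`, of `n ≥ 1` pairwise-disjoint axis-aligned
rectangles can be partitioned into at most `3n + 1` pairwise-disjoint axis-aligned
rectangles. -/
theorem stmt3 (n : ℕ) (hn : 1 ≤ n) (R₀ : Set (ℤ × ℤ))
    (hR₀ : ∃ a b c d : ℤ, R₀ = Set.Icc a b ×ˢ Set.Icc c d)
    (R : Fin n → Set (ℤ × ℤ))
    (hrect : ∀ i, ∃ a b c d : ℤ, R i = Set.Icc a b ×ˢ Set.Icc c d)
    (hsub : ∀ i, R i ⊆ R₀)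
    (hdisj : ∀ i j, i ≠ j → Disjoint (R i) (R j)) :
    ∃ (m : ℕ) (P : Fin m → Set (ℤ × ℤ)),
      m ≤ 3 * n + 1 ∧
      (∀ k, ∃ a b c d : ℤ, P k = Set.Icc a b ×ˢ Set.Icc c d) ∧
      (∀ k l, k ≠ l → Disjoint (P k) (P l)) ∧
      (⋃ k, P k) = R₀ \ ⋃ i, R i :=
  stmt3_general n R₀ hR₀ R hrect hsub hdisj
end

section
/- Let G be a graph on n ≥ 2 vertices such that every induced subgraph H of G with at least 2 vertices contains two distinct vertices u, v with sd_H(u,v) ≤ s. Then for every integer k with 2k ≤ n, G contains k pairwise-disjoint pairs (u₁,v₁), …, (u_k,v_k) of distinct vertices such that sd_G(uᵢ,vᵢ) ≤ s + 2(k-1) for every i. -/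
/-!
Greedily pick a pair `u ≠ v` with `sd ≤ s` inside the current vertex set, delete both vertices
and recurse on the rest. Deleting two vertices changes `sd` of any remaining pair by at most `2`,
so a pair chosen after `i` deletions has `sd ≤ s + 2i` in `G`, and `i ≤ k - 1`.
-/

/-- The symmetric difference `sd_{G[s]}(u,v)` of `u` and `v` inside the subgraph of `G`
induced on the finset `s`: the size of `(N(u)\{v}) △ (N(v)\{u})`, neighborhoods taken
within `s`. -/
def sdOn {V : Type*} [Fintype V] [DecidableEq V] (G : SimpleGraph V) [DecidableRel G.Adj]
    (s : Finset V) (u v : V) : ℕ :=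
  ((((G.neighborFinset u ∩ s) \ {v}) \ ((G.neighborFinset v ∩ s) \ {u})) ∪
   (((G.neighborFinset v ∩ s) \ {u}) \ ((G.neighborFinset u ∩ s) \ {v}))).card

open Finset

section Pairs

variable {V : Type*} {k : ℕ}

def pairVertex (p : Fin k → V × V) (x : Fin k × Bool) : V :=
  if x.2 then (p x.1).1 else (p x.1).2

@[simp] lemma pairVertex_cons_zero (a : V × V) (p : Fin k → V × V) (b : Bool) :
    pairVertex (Fin.cons a p : Fin (k + 1) → V × V) (0, b) = if b then a.1 else a.2 :=
  rfl

@[simp] lemma pairVertex_cons_succ (a : V × V) (p : Fin k → V × V) (i : Fin k) (b : Bool) :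
    pairVertex (Fin.cons a p : Fin (k + 1) → V × V) (i.succ, b) = pairVertex p (i, b) :=
  rfl

lemma injective_pairVertex_cons {p : Fin k → V × V} {u v : V} (huv : u ≠ v)
    (hu : ∀ x, pairVertex p x ≠ u) (hv : ∀ x, pairVertex p x ≠ v)
    (hp : Function.Injective (pairVertex p)) :
    Function.Injective (pairVertex (Fin.cons (u, v) p : Fin (k + 1) → V × V)) := by
  rintro ⟨i, b⟩ ⟨j, c⟩ h
  cases i using Fin.cases with
  | zero =>
    cases j using Fin.cases with
    | zero => cases b <;> cases c <;> simp_all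
    | succ j =>
      cases b
      · exact absurd h.symm (hv (j, c))
      · exact absurd h.symm (hu (j, c))
  | succ i =>
    cases j using Fin.cases with
    | zero =>
      cases c
      · exact absurd h (hv (i, b))
      · exact absurd h (hu (i, b))
    | succ j => simpa using @hp (i, b) (j, c) h

end Pairs

section SymmDiff

variable {V : Type*} [Fintype V] [DecidableEq V] (G : SimpleGraph V) [DecidableRel G.Adj]

lemma sdOn_le_sdOn_add_card_sdiff {t t' : Finset V} (h : t' ⊆ t) (u v : V) :
    sdOn G t u v ≤ sdOn G t' u v + #(t \ t') := by
  unfold sdOn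
  refine (card_le_card ?_).trans (card_union_le _ _)
  intro w hw
  have := @h w
  simp only [mem_union, mem_sdiff, mem_inter, mem_singleton] at *
  tauto

lemma sdOn_le_sdOn_erase_erase_add_two (t : Finset V) (a b u v : V) :
    sdOn G t u v ≤ sdOn G ((t.erase a).erase b) u v + 2 := by
  have hsub : (t.erase a).erase b ⊆ t := (erase_subset _ _).trans (erase_subset _ _)
  have hdiff : t \ (t.erase a).erase b ⊆ {a, b} := by
    intro w
    simp only [mem_sdiff, mem_erase, mem_insert, mem_singleton]
    tauto
  have := card_le_card hdiff
  have := card_le_two (a := a) (b := b)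
  have := sdOn_le_sdOn_add_card_sdiff G hsub u v
  omega

lemma exists_disjoint_pairs_sdOn_le (s : ℕ)
    (hsd : ∀ t : Finset V, 2 ≤ #t → ∃ u ∈ t, ∃ v ∈ t, u ≠ v ∧ sdOn G t u v ≤ s) :
    ∀ (k : ℕ) (t : Finset V), 2 * k ≤ #t →
      ∃ p : Fin k → V × V, (∀ x, pairVertex p x ∈ t) ∧ Function.Injective (pairVertex p) ∧
        ∀ i, sdOn G t (p i).1 (p i).2 ≤ s + 2 * (k - 1) := by
  intro k
  induction k with
  | zero => exact fun _ _ ↦ ⟨Fin.elim0, fun x ↦ x.1.elim0, fun x ↦ x.1.elim0, fun i ↦ i.elim0⟩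
  | succ k ih =>
    intro t ht
    obtain ⟨u, hu, v, hv, huv, hsduv⟩ := hsd t (by omega)
    set t' := (t.erase u).erase v
    have hcard : #t' = #t - 2 := by
      rw [card_erase_of_mem (mem_erase.2 ⟨huv.symm, hv⟩), card_erase_of_mem hu]; rfl
    obtain ⟨p, hpt', hpinj, hpsd⟩ := ih t' (by omega)
    refine ⟨Fin.cons (u, v) p, ?_, ?_, ?_⟩
    · rintro ⟨i, b⟩
      cases i using Fin.cases with
      | zero => cases b <;> simpa
      | succ i => exact mem_of_mem_erase (mem_of_mem_erase (hpt' (i, b)))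
    · refine injective_pairVertex_cons huv (fun x hx ↦ ?_) (fun x hx ↦ ?_) hpinj <;>
        simpa [t', hx] using hpt' x
    · intro i
      cases i using Fin.cases with
      | zero => simpa using hsduv.trans (Nat.le_add_right _ _)
      | succ i =>
        have : sdOn G t (p i).1 (p i).2 ≤ sdOn G t' (p i).1 (p i).2 + 2 :=
          sdOn_le_sdOn_erase_erase_add_two G t u v _ _
        have := hpsd i
        have := i.pos
        simp only [Fin.cons_succ]
        omega

end SymmDiff

theorem stmt8_general {V : Type*} [Fintype V] [DecidableEq V] (G : SimpleGraph V)
    [DecidableRel G.Adj] (s : ℕ)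
    (hsd : ∀ t : Finset V, 2 ≤ t.card → ∃ u ∈ t, ∃ v ∈ t, u ≠ v ∧ sdOn G t u v ≤ s) :
    ∀ k : ℕ, 2 * k ≤ Fintype.card V →
      ∃ p : Fin k → V × V,
        (∀ i, (p i).1 ≠ (p i).2) ∧
        (Function.Injective fun x : Fin k × Bool =>
          if x.2 then (p x.1).1 else (p x.1).2) ∧
        (∀ i, sdOn G Finset.univ (p i).1 (p i).2 ≤ s + 2 * (k - 1)) := by
  intro k hk
  obtain ⟨p, -, hinj, hsdp⟩ := exists_disjoint_pairs_sdOn_le G s hsd k univ (by simpa using hk)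
  exact ⟨p, fun i h ↦ by simpa using @hinj (i, true) (i, false) h, hinj, hsdp⟩

/-- If every induced subgraph of `G` on at least two vertices has a pair of distinct
vertices with symmetric difference at most `s`, then for every `k` with `2k ≤ n`,
`G` has `k` pairwise-disjoint pairs of distinct vertices, each of symmetric difference
at most `s + 2(k-1)` in `G`. -/
theorem stmt8 {V : Type*} [Fintype V] [DecidableEq V] (G : SimpleGraph V)
    [DecidableRel G.Adj] (s : ℕ) (hn : 2 ≤ Fintype.card V)
    (hsd : ∀ t : Finset V, 2 ≤ t.card → ∃ u ∈ t, ∃ v ∈ t, u ≠ v ∧ sdOn G t u v ≤ s) :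
    ∀ k : ℕ, 2 * k ≤ Fintype.card V →
      ∃ p : Fin k → V × V,
        (∀ i, (p i).1 ≠ (p i).2) ∧
        (Function.Injective fun x : Fin k × Bool =>
          if x.2 then (p x.1).1 else (p x.1).2) ∧
        (∀ i, sdOn G Finset.univ (p i).1 (p i).2 ≤ s + 2 * (k - 1)) :=
  stmt8_general G s hsd
end

section
/- Let D be a DAG whose sinks are the vertices of a graph G, with a set B of compressed edges, such that uv ∈ E(G) iff there is xy ∈ B with directed paths x→u and y→v in D. Construct the weighted digraph H as follows: take two disjoint copies D↓ and D↑ of D identified on V(G), where D↓ has all edges of D directed toward the sinks with weight 0, D↑ has all edges of D reversed (directed away from the sinks) with weight 0, and for each xy ∈ B add an edge of weight 1 from the copy of x in D↑ to the copy of y in D↓. Then for all u, v ∈ V(G), the distance from u to v in H equals the distance from u to v in G (edges of G directed both ways, unit weights). -/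
/-!
A walk in `H` of cost `k` between two vertices of `G` is a sequence of `k` gadgets "climb to an
ancestor `x` of the current sink, cross a compressed edge `(x, y)`, descend to a sink below `y`",
and each gadget is an edge of `G`; this gives `dist_H ≤ dist_G`. For the converse, the function
assigning to the bottom copy of `z` the least `G`-distance to `v` from a sink below `z`, and to
the top copy of `z` the greatest such distance, is a feasible potential for the weights of `H`:
a compressed edge `(x, y)` joins every sink below `x` to every sink below `y` in `G`.
-/

open scoped Classical

/-- Walks in a weighted digraph (weight `⊤` = no edge) with their total cost. -/
inductive CostWalk {α : Type*} (w : α → α → ℕ∞) : α → α → ℕ∞ → Prop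
  | nil (a : α) : CostWalk w a a 0
  | cons {a b c : α} {x : ℕ∞} : w a b ≠ ⊤ → CostWalk w b c x → CostWalk w a c (w a b + x)

/-- Distance in a weighted digraph: least total weight of a directed walk. -/
noncomputable def ddist {α : Type*} (w : α → α → ℕ∞) (a b : α) : ℕ∞ :=
  sInf {x | CostWalk w a b x}

/-- `x` is a sink of the digraph `E`. -/
def IsSink {N : Type*} (E : N → N → Prop) (x : N) : Prop := ∀ y, ¬ E x y

/-- Vertex set of `H`: two copies of `D` identified on the sinks.  `Sum.inl` is the
bottom copy `D↓` (all of `N`), `Sum.inr` holds the non-sink nodes of the top copy. -/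
noncomputable def upCopy {N : Type*} (E : N → N → Prop) (x : N) :
    N ⊕ {x : N // ¬ IsSink E x} :=
  if h : IsSink E x then Sum.inl x else Sum.inr ⟨x, h⟩

open Relation

namespace CostWalk

variable {α : Type*} {w : α → α → ℕ∞}

lemma single {a b : α} (h : w a b ≠ ⊤) : CostWalk w a b (w a b) := by
  simpa using CostWalk.cons h (.nil b)

lemma append {a b c : α} {x y : ℕ∞} (h₁ : CostWalk w a b x) (h₂ : CostWalk w b c y) :
    CostWalk w a c (x + y) := by
  induction h₁ with
  | nil => simpa using h₂
  | cons hab _ ih => rw [add_assoc]; exact .cons hab (ih h₂)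

lemma le_add_of_potential {f : α → ℕ∞} (hf : ∀ a b, f a ≤ w a b + f b) {a b : α}
    {x : ℕ∞} (h : CostWalk w a b x) : f a ≤ x + f b := by
  induction h with
  | nil => simp
  | cons _ _ ih => exact (hf _ _).trans (by rw [add_assoc]; gcongr)

end CostWalk

section ddist

variable {α : Type*} {w : α → α → ℕ∞}

lemma ddist_le {a b : α} {x : ℕ∞} (h : CostWalk w a b x) : ddist w a b ≤ x :=
  sInf_le h

lemma ddist_self (a : α) : ddist w a a = 0 :=
  nonpos_iff_eq_zero.1 (ddist_le (.nil a))

lemma ddist_le_weight (a b : α) : ddist w a b ≤ w a b := by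
  by_cases h : w a b = ⊤
  · simp [h]
  · exact ddist_le (.single h)

lemma ddist_triangle (a b c : α) : ddist w a c ≤ ddist w a b + ddist w b c := by
  simp only [ddist, sInf_eq_iInf]
  exact ENat.le_iInf₂_add_iInf₂ fun x hx y hy => iInf₂_le (x + y) (CostWalk.append hx hy)

lemma ddist_eq_zero_of_reflTransGen {a b : α} (h : ReflTransGen (fun a b => w a b = 0) a b) :
    ddist w a b = 0 := by
  induction h with
  | refl => exact ddist_self a
  | @tail b c _ hbc ih =>
    refine nonpos_iff_eq_zero.1 ((ddist_triangle a b c).trans ?_)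
    simpa [ih, hbc] using ddist_le_weight (w := w) b c

lemma le_ddist_add_of_potential {f : α → ℕ∞} (hf : ∀ a b, f a ≤ w a b + f b) (a b : α) :
    f a ≤ ddist w a b + f b := by
  rw [ddist, ENat.sInf_add]
  exact le_iInf₂ fun _ hx => hx.le_add_of_potential hf

lemma ddist_le_edist_of_adj {V : Type*} {G : SimpleGraph V} (f : V → α)
    (hf : ∀ s t, G.Adj s t → ddist w (f s) (f t) ≤ 1) (u v : V) :
    ddist w (f u) (f v) ≤ G.edist u v := by
  refine le_iInf fun p => ?_
  induction p with
  | nil => simp [ddist_self]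
  | @cons a b c hab p ih =>
    calc ddist w (f a) (f c) ≤ ddist w (f a) (f b) + ddist w (f b) (f c) := ddist_triangle _ _ _
      _ ≤ 1 + p.length := add_le_add (hf a b hab) ih
      _ = (p.cons hab).length := by push_cast [SimpleGraph.Walk.length_cons]; ring

end ddist

section Compression

variable {N : Type*} {E : N → N → Prop}

lemma upCopy_of_isSink {z : N} (h : IsSink E z) : upCopy E z = .inl z :=
  dif_pos h

lemma IsSink.eq_of_reflTransGen {z t : N} (hz : IsSink E z) (h : ReflTransGen E z t) : z = t := by
  rcases h.cases_head with rfl | ⟨c, hc, _⟩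
  · rfl
  · exact absurd hc (hz c)

lemma IsSink.reflTransGen_iff {z : N} (hz : IsSink E z) {s : {x : N // IsSink E x}} :
    ReflTransGen E z s ↔ s = ⟨z, hz⟩ :=
  ⟨fun h => Subtype.ext (hz.eq_of_reflTransGen h).symm, by rintro rfl; rfl⟩

/-- The weight function of `H`. -/
noncomputable def compressionWeight (E : N → N → Prop) (B : Set (N × N))
    (a b : N ⊕ {x : N // ¬ IsSink E x}) : ℕ∞ :=
  if (∃ x y, E x y ∧ a = Sum.inl x ∧ b = Sum.inl y) ∨
     (∃ x y, E x y ∧ a = upCopy E y ∧ b = upCopy E x)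
  then 0
  else if ∃ p ∈ B, a = upCopy E p.1 ∧ b = Sum.inl p.2 then 1 else ⊤

variable {B : Set (N × N)}

lemma compressionWeight_inl {x y : N} (h : E x y) :
    compressionWeight E B (.inl x) (.inl y) = 0 :=
  if_pos (.inl ⟨x, y, h, rfl, rfl⟩)

lemma compressionWeight_upCopy {x y : N} (h : E x y) :
    compressionWeight E B (upCopy E y) (upCopy E x) = 0 :=
  if_pos (.inr ⟨x, y, h, rfl, rfl⟩)

lemma compressionWeight_upCopy_inl_le {p : N × N} (hp : p ∈ B) :
    compressionWeight E B (upCopy E p.1) (.inl p.2) ≤ 1 := by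
  unfold compressionWeight
  split_ifs with _ hB
  · exact zero_le_one
  · exact le_rfl
  · exact absurd ⟨p, hp, rfl, rfl⟩ hB

lemma ddist_inl_eq_zero {z t : N} (h : ReflTransGen E z t) :
    ddist (compressionWeight E B) (.inl z) (.inl t) = 0 :=
  ddist_eq_zero_of_reflTransGen (h.lift _ fun _ _ => compressionWeight_inl)

lemma ddist_upCopy_eq_zero {z t : N} (h : ReflTransGen E z t) :
    ddist (compressionWeight E B) (upCopy E t) (upCopy E z) = 0 :=
  ddist_eq_zero_of_reflTransGen (h.swap.lift _ fun _ _ h => compressionWeight_upCopy (E := E) h)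

lemma ddist_inl_le_one {p : N × N} (hp : p ∈ B) {s t : N} (hs : IsSink E s)
    (h₁ : ReflTransGen E p.1 s) (h₂ : ReflTransGen E p.2 t) :
    ddist (compressionWeight E B) (.inl s) (.inl t) ≤ 1 := by
  rw [← upCopy_of_isSink hs]
  calc _ ≤ ddist (compressionWeight E B) (upCopy E s) (upCopy E p.1) +
        (ddist (compressionWeight E B) (upCopy E p.1) (.inl p.2) +
          ddist (compressionWeight E B) (.inl p.2) (.inl t)) :=
        (ddist_triangle _ (upCopy E p.1) _).trans (add_le_add le_rfl (ddist_triangle _ _ _))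
    _ ≤ 0 + (1 + 0) := by
        rw [ddist_upCopy_eq_zero h₁, ddist_inl_eq_zero h₂]
        gcongr
        exact (ddist_le_weight _ _).trans (compressionWeight_upCopy_inl_le hp)
    _ = 1 := by norm_num

variable {G : SimpleGraph {x : N // IsSink E x}}

lemma ddist_le_edist
    (hadj : ∀ s t : {x : N // IsSink E x}, G.Adj s t →
      ∃ p ∈ B, ReflTransGen E p.1 s ∧ ReflTransGen E p.2 t)
    (u v : {x : N // IsSink E x}) :
    ddist (compressionWeight E B) (.inl u.1) (.inl v.1) ≤ G.edist u v :=
  ddist_le_edist_of_adj (fun s => (.inl s.1 : N ⊕ {x : N // ¬ IsSink E x})) (fun s t hst => by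
    obtain ⟨p, hp, h₁, h₂⟩ := hadj s t hst
    exact ddist_inl_le_one hp s.2 h₁ h₂) u v

noncomputable def sinkPotential (G : SimpleGraph {x : N // IsSink E x})
    (v : {x : N // IsSink E x}) : N ⊕ {x : N // ¬ IsSink E x} → ℕ∞
  | .inl z => ⨅ (s : {x : N // IsSink E x}) (_ : ReflTransGen E z s), G.edist s v
  | .inr z => ⨆ (s : {x : N // IsSink E x}) (_ : ReflTransGen E z s), G.edist s v

variable {v : {x : N // IsSink E x}}

lemma sinkPotential_inl_of_isSink (u : {x : N // IsSink E x}) :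
    sinkPotential G v (.inl u.1) = G.edist u v := by
  simp [sinkPotential, u.2.reflTransGen_iff]

lemma sinkPotential_upCopy (z : N) :
    sinkPotential G v (upCopy E z) =
      ⨆ (s : {x : N // IsSink E x}) (_ : ReflTransGen E z s), G.edist s v := by
  unfold upCopy
  split_ifs with hz
  · simp [sinkPotential, hz.reflTransGen_iff]
  · rfl

lemma sinkPotential_le_add
    (hB : ∀ s t : {x : N // IsSink E x},
      (∃ p ∈ B, ReflTransGen E p.1 s ∧ ReflTransGen E p.2 t) → G.Adj s t)
    (a b : N ⊕ {x : N // ¬ IsSink E x}) :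
    sinkPotential G v a ≤ compressionWeight E B a b + sinkPotential G v b := by
  unfold compressionWeight
  split_ifs with h0 h1
  · rw [zero_add]
    rcases h0 with ⟨x, y, hxy, rfl, rfl⟩ | ⟨x, y, hxy, rfl, rfl⟩
    · simp only [sinkPotential]
      exact le_iInf₂ fun s hs => iInf₂_le s (.head hxy hs)
    · rw [sinkPotential_upCopy, sinkPotential_upCopy]
      exact iSup₂_le fun s hs =>
        le_iSup₂ (f := fun (s : {x : N // IsSink E x}) (_ : ReflTransGen E x s) => G.edist s v)
          s (.head hxy hs)
  · obtain ⟨p, hp, rfl, rfl⟩ := h1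
    rw [sinkPotential_upCopy, sinkPotential, ENat.add_iInf₂]
    refine iSup₂_le fun s hs => le_iInf₂ fun t ht => ?_
    have hst : G.edist s t ≤ 1 := (G.edist_eq_one_iff_adj.2 (hB s t ⟨p, hp, hs, ht⟩)).le
    exact G.edist_triangle.trans (add_le_add hst le_rfl)
  · simp

lemma edist_le_ddist
    (hB : ∀ s t : {x : N // IsSink E x},
      (∃ p ∈ B, ReflTransGen E p.1 s ∧ ReflTransGen E p.2 t) → G.Adj s t)
    (u : {x : N // IsSink E x}) :
    G.edist u v ≤ ddist (compressionWeight E B) (.inl u.1) (.inl v.1) := by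
  have := le_ddist_add_of_potential (sinkPotential_le_add (v := v) hB) (.inl u.1) (.inl v.1)
  rwa [sinkPotential_inl_of_isSink, sinkPotential_inl_of_isSink, G.edist_self, add_zero] at this

end Compression

theorem stmt14_general {N : Type*} (E : N → N → Prop)
    (B : Set (N × N))
    (G : SimpleGraph {x : N // IsSink E x})
    (hG : ∀ u v : {x : N // IsSink E x},
      G.Adj u v ↔ ∃ p ∈ B, Relation.ReflTransGen E p.1 u.1 ∧ Relation.ReflTransGen E p.2 v.1)
    (w : (N ⊕ {x : N // ¬ IsSink E x}) → (N ⊕ {x : N // ¬ IsSink E x}) → ℕ∞)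
    (hw : ∀ a b, w a b =
      if (∃ x y, E x y ∧ a = Sum.inl x ∧ b = Sum.inl y) ∨
         (∃ x y, E x y ∧ a = upCopy E y ∧ b = upCopy E x)
      then 0
      else if ∃ p ∈ B, a = upCopy E p.1 ∧ b = Sum.inl p.2 then 1 else ⊤) :
    ∀ u v : {x : N // IsSink E x},
      ddist w (Sum.inl u.1) (Sum.inl v.1) = G.edist u v := by
  obtain rfl : w = compressionWeight E B := funext fun a => funext (hw a)
  intro u v
  exact le_antisymm (ddist_le_edist (fun s t => (hG s t).1) u v)
    (edist_le_ddist (fun s t => (hG s t).2) u)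

/-- The Bannach–Marwitz–Tantau construction: given a DAG compression `(D,B)` of `G`
(sinks of `D` are the vertices of `G`), the weighted digraph `H` made of a bottom copy
of `D` (edges toward the sinks, weight 0), a top copy of `D` (edges reversed, weight 0),
identified on the sinks, plus an edge of weight 1 from the top copy of `x` to the bottom
copy of `y` for each compressed edge `(x,y) ∈ B`, satisfies
`dist_H(u,v) = dist_G(u,v)` for all vertices `u, v` of `G`. -/
theorem stmt14 {N : Type*} (E : N → N → Prop)
    (hacyc : ∀ x, ¬ Relation.TransGen E x x)
    (B : Set (N × N))
    (G : SimpleGraph {x : N // IsSink E x})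
    (hG : ∀ u v : {x : N // IsSink E x},
      G.Adj u v ↔ ∃ p ∈ B, Relation.ReflTransGen E p.1 u.1 ∧ Relation.ReflTransGen E p.2 v.1)
    (w : (N ⊕ {x : N // ¬ IsSink E x}) → (N ⊕ {x : N // ¬ IsSink E x}) → ℕ∞)
    (hw : ∀ a b, w a b =
      if (∃ x y, E x y ∧ a = Sum.inl x ∧ b = Sum.inl y) ∨
         (∃ x y, E x y ∧ a = upCopy E y ∧ b = upCopy E x)
      then 0
      else if ∃ p ∈ B, a = upCopy E p.1 ∧ b = Sum.inl p.2 then 1 else ⊤) :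
    ∀ u v : {x : N // IsSink E x},
      ddist w (Sum.inl u.1) (Sum.inl v.1) = G.edist u v :=
  stmt14_general E B G hG w hw
end
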